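/- arXiv:2307.05997 — 5 statements merged into one kernel-verified Lean document; each statement's English description precedes it below -/
import Mathlib

section
/- Let p be a prime and K a field of characteristic p. The polynomial f(x) = x^{p+1} - x^p in K[x] is a Casas-Alvero polynomial of degree p+1 that is not a power of a linear polynomial; i.e., for each i in {1,...,p}, f has a non-constant common factor with its i-th Hasse derivative, yet f is not of the form (x-b)^{p+1}. -/
open Polynomial

/-- A monic polynomial of degree `d` is Casas–Alvero if for each `i ∈ {1, …, d-1}` it has
a non-constant common factor with its `i`-th Hasse derivative. -/
def IsCasasAlvero {K : Type*} [Field K] (d : ℕ) (f : Polynomial K) : Prop :=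
  ∀ i : ℕ, 1 ≤ i → i ≤ d - 1 →
    ∃ g : Polynomial K, 0 < g.natDegree ∧ g ∣ f ∧ g ∣ Polynomial.hasseDeriv i f

/-- In characteristic `p`, the polynomial `x^{p+1} - x^p` is a Casas–Alvero polynomial of
degree `p+1` which is not a power of a linear polynomial. -/
theorem casas_alvero_counterexample_char_p (p : ℕ) (hp : p.Prime)
    (K : Type*) [Field K] [CharP K p] :
    ((X : Polynomial K) ^ (p + 1) - X ^ p).natDegree = p + 1 ∧
    IsCasasAlvero (p + 1) ((X : Polynomial K) ^ (p + 1) - X ^ p) ∧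
    ¬ ∃ b : K, (X : Polynomial K) ^ (p + 1) - X ^ p = (X - C b) ^ (p + 1) := by
  have hf : (X : Polynomial K) ^ (p + 1) - X ^ p = X ^ p * (X - C 1) := by
    rw [map_one]; ring
  have hH : ∀ i : ℕ, hasseDeriv i ((X : Polynomial K) ^ (p + 1) - X ^ p)
      = monomial (p + 1 - i) (((p+1).choose i : K)) - monomial (p - i) ((p.choose i : K)) := by
    intro i
    rw [map_sub, X_pow_eq_monomial, X_pow_eq_monomial, hasseDeriv_monomial, hasseDeriv_monomial,
      mul_one, mul_one]
  refine ⟨?_, ?_, ?_⟩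
  · compute_degree!
  · intro i hi1 hi2
    simp only [Nat.add_sub_cancel] at hi2
    rcases lt_or_eq_of_le hi2 with hlt | heq
    · refine ⟨X, by simp, ?_, ?_⟩
      · rw [hf]; exact dvd_mul_of_dvd_left (dvd_pow_self X hp.pos.ne') _
      · rw [hH i]
        refine dvd_sub ?_ ?_
        · rw [← C_mul_X_pow_eq_monomial]
          exact Dvd.dvd.mul_left (dvd_pow_self X (by omega)) _
        · rw [← C_mul_X_pow_eq_monomial]
          exact Dvd.dvd.mul_left (dvd_pow_self X (by omega)) _
    · subst heq
      refine ⟨X - C 1, by rw [natDegree_X_sub_C]; norm_num, ⟨X ^ i, by rw [hf]; ring⟩, ?_⟩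
      rw [hH i]
      have h1 : (i + 1).choose i = i + 1 := Nat.choose_succ_self_right i
      have h2 : ((i + 1 : ℕ) : K) = 1 := by
        push_cast [CharP.cast_eq_zero K i]; ring
      rw [h1, h2, Nat.choose_self, Nat.cast_one]
      simp only [Nat.add_sub_cancel_left, Nat.sub_self]
      rw [monomial_one_one_eq_X, monomial_zero_left]
  · rintro ⟨b, hb⟩
    have h0 : (0 : K) - b = 0 := by
      have h := congrArg (eval 0) hb
      simp only [eval_sub, eval_pow, eval_X, eval_C] at h
      rw [zero_pow (by omega : p + 1 ≠ 0), zero_pow hp.pos.ne', sub_zero] at h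
      exact pow_eq_zero_iff (n := p + 1) (by omega) |>.mp h.symm
    have h1 : (1 : K) - b = 0 := by
      have h := congrArg (eval 1) hb
      simp only [eval_sub, eval_pow, eval_X, eval_C, one_pow, sub_self] at h
      exact pow_eq_zero_iff (n := p + 1) (by omega) |>.mp h.symm
    have : (0 : K) = 1 := by linear_combination h0 - h1
    exact zero_ne_one this
end

section
/- For every d ≥ 2 and every i in {1,...,d-1}, viewing the resultant R_i = Res(f, H_i(f)) of the generic polynomial f = x^d + a_1 x^{d-1} + ... + a_{d-1}x and its i-th Hasse derivative as a polynomial in Z[a_1,...,a_{d-1}], the coefficient of the monomial a_{d-i}^d in R_i equals (-1)^{d-i} (C(d,i) - 1)^{d-i}. -/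
open Polynomial

/-- The Sylvester matrix of `f` (regarded as having degree `m`) and `g`
(regarded as having degree `n`). -/
def sylvester {R : Type*} [CommRing R] (f g : Polynomial R) (m n : ℕ) :
    Matrix (Fin (m + n)) (Fin (m + n)) R :=
  Matrix.of fun i j =>
    if (i : ℕ) < n then
      (if (i : ℕ) ≤ j ∧ (j : ℕ) ≤ (i : ℕ) + m then f.coeff (m + i - j) else 0)
    else
      (if (i : ℕ) - n ≤ j ∧ (j : ℕ) ≤ ((i : ℕ) - n) + n then g.coeff (n + ((i : ℕ) - n) - j) else 0)

/-- The resultant of `f` and `g`, regarded as polynomials of degrees `m` and `n`. -/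
def res {R : Type*} [CommRing R] (f g : Polynomial R) (m n : ℕ) : R :=
  (_root_.sylvester f g m n).det

/-- The generic monic polynomial `x^d + a_1 x^{d-1} + ⋯ + a_{d-1} x` with zero constant
term over `ℤ[a_1, …, a_{d-1}]`, where `MvPolynomial.X j` plays the role of `a_j`. -/
noncomputable def genF (d : ℕ) : Polynomial (MvPolynomial ℕ ℤ) :=
  X ^ d + ∑ j ∈ Finset.Icc 1 (d - 1), C (MvPolynomial.X j) * X ^ (d - j)

/-- `R_i = Res(f, H_i(f))`, the resultant of the generic polynomial and its `i`-th Hasse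
derivative, regarded as polynomials of degrees `d` and `d - i`. -/
noncomputable def Rres (d i : ℕ) : MvPolynomial ℕ ℤ :=
  res (genF d) (Polynomial.hasseDeriv i (genF d)) d (d - i)

/-!
Specialise `a_{d-i} ↦ t` and every other `a_j ↦ 0`. This ring map commutes with Hasse
derivatives and Sylvester determinants, and it turns the coefficient of `a_{d-i}^d` into the
coefficient of `t^d`. With `k = d - i` the specialised pair is `x^d + t x^i` and
`C(d,i) x^k + t`. Its Sylvester matrix is block lower triangular: splitting off the last row and
column `i` times (each contributes a diagonal `t`) leaves the `2k × 2k` block matrix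
`[[1, t], [C(d,i), t]]` (blocks scalar multiples of the identity), of determinant
`(t - C(d,i) t)^k`. So the specialised resultant is `t^d (1 - C(d,i))^k`.
-/

theorem MvPolynomial.coeff_aeval_piSingle_X {σ R : Type*} [CommRing R] [DecidableEq σ]
    (v : σ) (n : ℕ) (p : MvPolynomial σ R) :
    (aeval (Pi.single v (Polynomial.X : R[X])) p).coeff n = coeff (Finsupp.single v n) p := by
  induction p using MvPolynomial.induction_on' with
  | add p q hp hq => simp only [map_add, Polynomial.coeff_add, coeff_add, hp, hq]
  | monomial m c =>
    rw [aeval_monomial, coeff_monomial, Polynomial.algebraMap_eq]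
    by_cases hm : m = Finsupp.single v (m v)
    · rw [hm, Finsupp.prod_single_index (by simp), Pi.single_eq_same, coeff_C_mul_X_pow]
      simp only [(Finsupp.single_injective v).eq_iff, eq_comm]
    · obtain ⟨w, hwv, hw⟩ : ∃ w, w ≠ v ∧ m w ≠ 0 := by
        by_contra! h
        exact hm (Finsupp.ext fun w => by by_cases hwv : w = v <;> simp [hwv, h w])
      rw [Finsupp.prod, Finset.prod_eq_zero (Finsupp.mem_support_iff.mpr hw)
        (by simp [hwv, hw]), mul_zero, Polynomial.coeff_zero, if_neg]
      rintro rfl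
      simp at hm

theorem Polynomial.hasseDeriv_map {R S : Type*} [Semiring R] [Semiring S] (k : ℕ) (p : R[X])
    (f : R →+* S) : hasseDeriv k (p.map f) = (hasseDeriv k p).map f := by
  ext n
  simp only [hasseDeriv_coeff, coeff_map, map_mul, map_natCast]

theorem Polynomial.hasseDeriv_X_pow_add_C_mul_X_pow {R : Type*} [Semiring R] (t : R)
    (d i : ℕ) : hasseDeriv i (X ^ d + C t * X ^ i) = C (d.choose i : R) * X ^ (d - i) + C t := by
  simp only [map_add, ← monomial_one_right_eq_X_pow, C_mul_monomial, hasseDeriv_monomial,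
    Nat.choose_self, Nat.sub_self, monomial_zero_left, mul_one, Nat.cast_one, one_mul]

theorem map_res {R S : Type*} [CommRing R] [CommRing S] (φ : R →+* S) (f g : R[X]) (m n : ℕ) :
    φ (res f g m n) = res (f.map φ) (g.map φ) m n := by
  rw [res, res, RingHom.map_det]
  congr 1
  ext r j
  simp only [_root_.sylvester, RingHom.mapMatrix_apply, Matrix.map_apply, Matrix.of_apply,
    apply_ite φ, map_zero, coeff_map]

theorem genF_map_aeval_piSingle {d k : ℕ} (hk : k ∈ Finset.Icc 1 (d - 1)) :
    (genF d).map (MvPolynomial.aeval (Pi.single k (X : ℤ[X]))).toRingHom =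
      X ^ d + C X * X ^ (d - k) := by
  rw [genF, Polynomial.map_add, Polynomial.map_pow, map_X, Polynomial.map_sum,
    Finset.sum_eq_single_of_mem k hk]
  · simp
  · intro j _ hjk
    simp [hjk]

section BandMatrix

variable {A : Type*} [CommRing A]

def bandMatrix (a N : A) (d k : ℕ) : Matrix (Fin (d + k)) (Fin (d + k)) A :=
  Matrix.of fun r j =>
    if (j : ℕ) = r then (if (r : ℕ) < k then 1 else a)
    else if (r : ℕ) < k ∧ (j : ℕ) = r + k then a
    else if (r : ℕ) = j + k then N else 0

theorem det_bandMatrix_self (a N : A) (k : ℕ) :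
    (bandMatrix a N k k).det = a ^ k * (1 - N) ^ k := by
  have hblocks : (bandMatrix a N k k).submatrix finSumFinEquiv finSumFinEquiv =
      Matrix.fromBlocks 1 (a • 1) (N • 1) (a • 1) := by
    ext (r | r) (j | j) <;>
      simp only [bandMatrix, Matrix.submatrix_apply, Matrix.fromBlocks_apply₁₁,
        Matrix.fromBlocks_apply₁₂, Matrix.fromBlocks_apply₂₁, Matrix.fromBlocks_apply₂₂,
        Matrix.of_apply, Matrix.smul_apply, Matrix.one_apply, Fin.ext_iff,
        smul_eq_mul, mul_ite, mul_one, mul_zero, finSumFinEquiv_apply_left,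
        finSumFinEquiv_apply_right, Fin.val_castAdd, Fin.val_natAdd] <;>
      split_ifs <;> first | rfl | omega
  rw [← Matrix.det_submatrix_equiv_self finSumFinEquiv, hblocks, Matrix.det_fromBlocks_one₁₁,
    Matrix.smul_mul, Matrix.mul_smul, Matrix.one_mul, smul_smul, ← sub_smul, Matrix.det_smul,
    Matrix.det_one, Fintype.card_fin, mul_one, ← mul_pow]
  ring

theorem det_bandMatrix (a N : A) {d k : ℕ} (hkd : k ≤ d) :
    (bandMatrix a N d k).det = a ^ d * (1 - N) ^ k := by
  induction d, hkd using Nat.le_induction with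
  | base => exact det_bandMatrix_self a N k
  | succ d hkd ih =>
    let e : Fin (d + k) ⊕ Fin 1 ≃ Fin (d + 1 + k) := finSumFinEquiv.trans (finCongr (by omega))
    have hblocks : (bandMatrix a N (d + 1) k).submatrix e e =
        Matrix.fromBlocks (bandMatrix a N d k) 0
          (Matrix.of fun _ j => if (j : ℕ) = d then N else 0) (a • 1) := by
      ext (r | r) (j | j) <;>
        simp only [e, bandMatrix, Equiv.trans_apply, finCongr_apply, Fin.val_cast,
          Matrix.submatrix_apply, Matrix.fromBlocks_apply₁₁, Matrix.fromBlocks_apply₁₂,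
          Matrix.fromBlocks_apply₂₁, Matrix.fromBlocks_apply₂₂, Matrix.of_apply,
          Matrix.smul_apply, Matrix.one_apply, Matrix.zero_apply, Fin.ext_iff, smul_eq_mul,
          mul_ite, mul_one, mul_zero, finSumFinEquiv_apply_left, finSumFinEquiv_apply_right,
          Fin.val_castAdd, Fin.val_natAdd] <;>
        split_ifs <;> first | rfl | omega
    rw [← Matrix.det_submatrix_equiv_self e, hblocks, Matrix.det_fromBlocks_zero₁₂, ih,
      Matrix.det_smul, Matrix.det_one, Fintype.card_fin]
    ring

theorem sylvester_eq_bandMatrix (a N : A) {d i k : ℕ} (hik : i + k = d) (hk : 1 ≤ k) :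
    _root_.sylvester (X ^ d + C a * X ^ i) (C N * X ^ k + C a) d k = bandMatrix a N d k := by
  ext r j
  simp only [_root_.sylvester, bandMatrix, Matrix.of_apply, coeff_add, coeff_X_pow, coeff_C_mul,
    coeff_C]
  split_ifs <;> first | rfl | omega | simp

end BandMatrix

theorem coeff_pure_power_resultant_general (d i : ℕ) (hi1 : 1 ≤ i) (hi2 : i ≤ d - 1) :
    MvPolynomial.coeff (Finsupp.single (d - i) d) (Rres d i) =
      (-1) ^ (d - i) * ((d.choose i : ℤ) - 1) ^ (d - i) := by
  set k := d - i
  let ψ := (MvPolynomial.aeval (R := ℤ) (Pi.single k (X : ℤ[X]))).toRingHom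
  have hf : (genF d).map ψ = X ^ d + C X * X ^ i := by
    rw [genF_map_aeval_piSingle (Finset.mem_Icc.mpr ⟨by omega, by omega⟩),
      show d - k = i by omega]
  have hg : (hasseDeriv i (genF d)).map ψ = C (d.choose i : ℤ[X]) * X ^ k + C X := by
    rw [← hasseDeriv_map, hf, hasseDeriv_X_pow_add_C_mul_X_pow]
  have hψ : ψ (Rres d i) = C ((1 - d.choose i : ℤ) ^ k) * X ^ d := by
    rw [Rres, map_res, hf, hg, res, sylvester_eq_bandMatrix _ _ (by omega) (by omega),
      det_bandMatrix _ _ (by omega)]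
    simp only [map_pow, map_sub, map_one, map_natCast]
    ring
  rw [← MvPolynomial.coeff_aeval_piSingle_X]
  change (ψ (Rres d i)).coeff d = _
  rw [hψ, coeff_C_mul_X_pow, if_pos rfl, ← neg_sub, neg_pow]

/-- The coefficient of `a_{d-i}^d` in the resultant `R_i` is `(-1)^{d-i} (C(d,i) - 1)^{d-i}`. -/
theorem coeff_pure_power_resultant (d i : ℕ) (hd : 2 ≤ d) (hi1 : 1 ≤ i) (hi2 : i ≤ d - 1) :
    MvPolynomial.coeff (Finsupp.single (d - i) d) (Rres d i) =
      (-1) ^ (d - i) * ((d.choose i : ℤ) - 1) ^ (d - i) :=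
  coeff_pure_power_resultant_general d i hi1 hi2
end

section
/- Let d ≥ 2 and let p be a prime such that p divides C(d,i) - 1 for some i in {1,...,d-1}. Then the Casas-Alvero conjecture fails in degree d over any field of characteristic p: there exists a monic Casas-Alvero polynomial of degree d over F_p that is not a power of a linear polynomial. -/
open Polynomial

/-- If `p` is a prime dividing `C(d,i) - 1` for some `i ∈ {1, …, d-1}`, then the
Casas–Alvero conjecture fails in degree `d` and characteristic `p`: there is a monic
Casas–Alvero polynomial of degree `d` over `F_p` that is not a power of a linear
polynomial. -/
theorem casas_alvero_fails_of_dvd_choose_sub_one (d : ℕ) (hd : 2 ≤ d)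
    (p : ℕ) [Fact p.Prime] (i : ℕ) (hi1 : 1 ≤ i) (hi2 : i ≤ d - 1)
    (hdvd : (p : ℤ) ∣ (d.choose i : ℤ) - 1) :
    ∃ f : Polynomial (ZMod p), f.Monic ∧ f.natDegree = d ∧ IsCasasAlvero d f ∧
      ¬ ∃ g : Polynomial (ZMod p), g.degree = 1 ∧ f = g ^ d := by
  have hid : i < d := by omega
  have hchoose : ((d.choose i : ℕ) : ZMod p) = 1 := by
    have h := (ZMod.intCast_zmod_eq_zero_iff_dvd _ p).mpr hdvd
    push_cast at h
    linear_combination h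
  refine ⟨X ^ d + X ^ i, ?_, ?_, ?_, ?_⟩
  · apply (monic_X_pow d).add_of_left
    rw [degree_X_pow, degree_X_pow]
    exact_mod_cast hid
  · have h : (X ^ d + X ^ i : Polynomial (ZMod p)).degree = d := by
      rw [degree_add_eq_left_of_degree_lt] <;> simp [degree_X_pow]
      exact_mod_cast hid
    exact natDegree_eq_of_degree_eq_some h
  · intro k hk1 hk2
    rcases eq_or_ne k i with h | hki
    · subst h
      refine ⟨X ^ (d - k) + 1, ?_, ⟨X ^ k, ?_⟩, ?_⟩
      · have h2 : (X ^ (d-k) + 1 : Polynomial (ZMod p)).degree = ((d - k : ℕ) : WithBot ℕ) := by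
          rw [degree_add_eq_left_of_degree_lt] <;> simp [degree_X_pow]
          omega
        have := natDegree_eq_of_degree_eq_some h2
        omega
      · rw [add_mul, one_mul, ← pow_add, Nat.sub_add_cancel hid.le]
      · have h1 : hasseDeriv k (X ^ d + X ^ k : Polynomial (ZMod p))
            = X ^ (d - k) + 1 := by
          rw [map_add, ← monomial_one_right_eq_X_pow, ← monomial_one_right_eq_X_pow,
            hasseDeriv_monomial, hasseDeriv_monomial]
          simp [hchoose, monomial_one_right_eq_X_pow]
        rw [h1]
    · refine ⟨X, by simp, dvd_add (dvd_pow_self X (by omega)) (dvd_pow_self X (by omega)), ?_⟩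
      rw [map_add, ← monomial_one_right_eq_X_pow (n := d), ← monomial_one_right_eq_X_pow (n := i),
        hasseDeriv_monomial, hasseDeriv_monomial]
      apply dvd_add
      · rw [← C_mul_X_pow_eq_monomial]
        exact Dvd.dvd.mul_left (dvd_pow_self X (by omega)) _
      · rcases Nat.lt_or_ge i k with h | h
        · simp [Nat.choose_eq_zero_of_lt h]
        · rw [← C_mul_X_pow_eq_monomial]
          exact Dvd.dvd.mul_left (dvd_pow_self X (by omega)) _
  · rintro ⟨g, hg1, hg2⟩
    have h0 : (g.eval 0) ^ d = 0 := by
      have h := congrArg (eval 0) hg2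
      rw [eval_add, eval_pow, eval_pow, eval_X, zero_pow (by omega : d ≠ 0),
        zero_pow (by omega : i ≠ 0), eval_pow] at h
      simpa using h.symm
    have hg0 : g.eval 0 = 0 := pow_eq_zero_iff (by omega : d ≠ 0) |>.mp h0
    have hgeq : g = C (g.coeff 1) * X := by
      have h := eq_X_add_C_of_degree_le_one (p := g) (le_of_eq hg1)
      rwa [coeff_zero_eq_eval_zero, hg0, map_zero, add_zero] at h
    have hcoeff := congrArg (fun q => coeff q i) hg2
    simp only [coeff_add, coeff_X_pow, if_neg hid.ne, if_pos rfl] at hcoeff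
    rw [hgeq, mul_pow, ← C_pow, coeff_C_mul, coeff_X_pow, if_neg hid.ne, mul_zero] at hcoeff
    simp at hcoeff
end

section
/- Let d ≥ 2 and p a prime with p | C(d,i) - 1 for some i in {1,...,d-1}. Then the polynomial f(x) = x^d + x^i over F_p is a Casas-Alvero polynomial that is not equal to (x-b)^d for any b in the algebraic closure of F_p. -/
open Polynomial

/-- If `p` is a prime with `p ∣ C(d,i) - 1` for some `i ∈ {1, …, d-1}`, then
`f = x^d + x^i` over `F_p` is a Casas–Alvero polynomial which is not of the form
`(x - b)^d` for any `b` in the algebraic closure of `F_p`. -/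
theorem x_pow_add_x_pow_is_casas_alvero (d : ℕ) (hd : 2 ≤ d)
    (p : ℕ) [Fact p.Prime] (i : ℕ) (hi1 : 1 ≤ i) (hi2 : i ≤ d - 1)
    (hdvd : (p : ℤ) ∣ (d.choose i : ℤ) - 1) :
    IsCasasAlvero d ((X : Polynomial (ZMod p)) ^ d + X ^ i) ∧
      ¬ ∃ b : AlgebraicClosure (ZMod p),
        ((X : Polynomial (ZMod p)) ^ d + X ^ i).map
            (algebraMap (ZMod p) (AlgebraicClosure (ZMod p))) = (X - C b) ^ d := by
  have hid : i < d := by omega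
  have hchoose : ((d.choose i : ℕ) : ZMod p) = 1 := by
    have : (((d.choose i : ℤ) - 1 : ℤ) : ZMod p) = 0 := by
      rw [ZMod.intCast_zmod_eq_zero_iff_dvd]; exact hdvd
    push_cast at this
    linear_combination this
  have hhd : ∀ k : ℕ, hasseDeriv k ((X : Polynomial (ZMod p)) ^ d + X ^ i) =
      monomial (d - k) ((d.choose k : ZMod p)) + monomial (i - k) ((i.choose k : ZMod p)) := by
    intro k
    rw [map_add, X_pow_eq_monomial, X_pow_eq_monomial, hasseDeriv_monomial,
      hasseDeriv_monomial, mul_one, mul_one]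
  constructor
  · intro k hk1 hk2
    by_cases hki : k = i
    · subst hki
      refine ⟨X ^ (d - k) + 1, ?_, ?_, ?_⟩
      · rw [show (1 : Polynomial (ZMod p)) = C 1 by simp, natDegree_X_pow_add_C]
        omega
      · refine ⟨X ^ k, ?_⟩
        rw [add_mul, ← pow_add, Nat.sub_add_cancel hid.le, one_mul]
      · rw [hhd, hchoose, Nat.choose_self, Nat.cast_one, Nat.sub_self,
          ← X_pow_eq_monomial, monomial_zero_left, map_one]
    · refine ⟨X, by simp, ?_, ?_⟩
      · rw [X_dvd_iff]
        simp only [coeff_add, coeff_X_pow, if_neg (by omega : ¬(0 = d)),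
          if_neg (by omega : ¬(0 = i)), add_zero]
      · rw [X_dvd_iff, hhd]
        rcases lt_or_gt_of_ne hki with h | h
        · have h1 : d - k ≠ 0 := by omega
          have h2 : i - k ≠ 0 := by omega
          simp [coeff_monomial, h1, h2]
        · have h1 : d - k ≠ 0 := by omega
          have h2 : i.choose k = 0 := Nat.choose_eq_zero_of_lt h
          simp [coeff_monomial, h1, h2]
  · rintro ⟨b, hb⟩
    rw [Polynomial.map_add, Polynomial.map_pow, Polynomial.map_pow, map_X] at hb
    have hb0 : b = 0 := by
      have := congrArg (Polynomial.eval 0) hb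
      simp [zero_pow (by omega : d ≠ 0), zero_pow (by omega : i ≠ 0)] at this
      simpa [neg_eq_zero] using pow_eq_zero_iff (by omega : d ≠ 0) |>.mp this.symm
    subst hb0
    simp only [map_zero, sub_zero] at hb
    have := congrArg (fun q => Polynomial.coeff q i) hb
    simp [coeff_X_pow, hid.ne'] at this
end

section
/- For d ≥ 2 and i in {2,...,d-1}, the coefficient of the monomial a_{d-1}^{d-i} a_{d-i} in the resultant R_i = Res(f, H_i(f)) ∈ Z[a_1,...,a_{d-1}] equals (-1)^{(d-1)(d-i)} C(d,i)^{d-1}. -/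
open Polynomial

/-!
Every entry of the Sylvester matrix of `f` and `H_i(f)` is a monomial: in a row of `f` whose
band starts in column `k`, the entry in column `k + o` is `a_o` (with `a_0 = 1`), and in a row
of `H_i(f)` it is `C(d - o, i) a_o`. So the coefficient of a monomial in the determinant is a
signed sum over the permutations picking entries whose product is that monomial. For
`a_{d-1}^{d-i} a_{d-i}` there is only one: `a_{d-1}` occurs only in the `d - i` rows of `f`, so
each of them must contribute it, which fixes `d - i` columns; the last column can then only be
taken by the last row of `H_i(f)`, with entry `a_{d-i}`, and every other row of `H_i(f)` must
contribute its constant leading entry `C(d, i)`. That permutation is the `(d - i)`-th power of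
a cycle of length `2d - i - 1`, of sign `(-1)^{(d-1)(d-i)}`.
-/

open scoped Finset

namespace MvPolynomial

variable {ι σ R : Type*} [Fintype ι] [DecidableEq ι] [CommRing R]

theorem coeff_det_eq_of_unique {M : Matrix ι ι (MvPolynomial σ R)} {w : ι → ι → σ →₀ ℕ}
    {c : ι → ι → R} (hM : ∀ r j, M r j = monomial (w r j) (c r j)) {m : σ →₀ ℕ}
    (π₀ : Equiv.Perm ι) (hπ₀ : ∑ j, w (π₀ j) j = m)
    (huniq : ∀ π : Equiv.Perm ι, ∑ j, w (π j) j = m → (∀ j, c (π j) j ≠ 0) → π = π₀) :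
    coeff m M.det = Equiv.Perm.sign π₀ * ∏ j, c (π₀ j) j := by
  classical
  have hterm (π : Equiv.Perm ι) :
      coeff m ((Equiv.Perm.sign π : ℤ) * ∏ j, M (π j) j : MvPolynomial σ R) =
        if ∑ j, w (π j) j = m then Equiv.Perm.sign π * ∏ j, c (π j) j else 0 := by
    simp_rw [hM, ← monomial_sum_prod, ← map_intCast (C : R →+* MvPolynomial σ R), coeff_C_mul,
      coeff_monomial, mul_ite, mul_zero]
  rw [Matrix.det_apply', coeff_sum, Finset.sum_eq_single π₀, hterm, if_pos hπ₀]
  · intro π _ hπ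
    rw [hterm, ite_eq_right_iff]
    intro hw
    obtain ⟨k, hk⟩ : ∃ k, c (π k) k = 0 := by
      by_contra! hc
      exact hπ (huniq π hw hc)
    rw [Finset.prod_eq_zero (f := fun j => c (π j) j) (Finset.mem_univ k) hk, mul_zero]
  · simp

end MvPolynomial

theorem Fin.val_cycleRange_pow_apply {N : ℕ} (c x : Fin N) (t : ℕ) :
    ((Fin.cycleRange c ^ t) x : ℕ) =
      if (x : ℕ) ≤ c then ((x : ℕ) + t) % (c + 1) else x := by
  induction t with
  | zero =>
    split_ifs with hx
    · exact (Nat.mod_eq_of_lt (Nat.lt_succ_of_le hx)).symm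
    · rfl
  | succ t ih =>
    rw [pow_succ', Equiv.Perm.mul_apply]
    split_ifs with hx
    · rw [if_pos hx] at ih
      have hle : (Fin.cycleRange c ^ t) x ≤ c :=
        Fin.le_def.mpr (ih ▸ Nat.le_of_lt_succ (Nat.mod_lt _ (Nat.succ_pos _)))
      rw [Fin.coe_cycleRange_of_le hle, ← Nat.add_assoc, ← Nat.mod_add_mod, ← ih]
      split_ifs with heq
      · rw [heq, Nat.mod_self]
      · exact (Nat.mod_eq_of_lt (Nat.succ_lt_succ (Fin.lt_def.mp
          (lt_of_le_of_ne hle heq)))).symm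
    · rw [if_neg hx] at ih
      rw [Fin.ext ih, Fin.cycleRange_of_gt (Fin.lt_def.mpr (not_le.mp hx))]

/-- The exponent vector of the generic coefficient `a_o`, with `a_0 = 1`. -/
noncomputable def aDegree (o : ℕ) : ℕ →₀ ℕ := if o = 0 then 0 else Finsupp.single o 1

theorem sum_aDegree_apply {α : Type*} (s : Finset α) (o : α → ℕ) {t : ℕ} (ht : 0 < t) :
    (∑ x ∈ s, aDegree (o x)) t = #{x ∈ s | o x = t} := by
  rw [Finsupp.finsetSum_apply, Finset.card_filter]
  refine Finset.sum_congr rfl fun x _ => ?_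
  rcases Nat.eq_zero_or_pos (o x) with h | h
  · simp [aDegree, h, ht.ne]
  · simp [aDegree, h.ne', Finsupp.single_apply]

theorem coeff_genF_sub {d o : ℕ} (ho : o ≤ d) (hd : 0 < d) :
    (genF d).coeff (d - o) = MvPolynomial.monomial (aDegree o) (if o < d then 1 else 0) := by
  have hterm (j : ℕ) (hj : j ∈ Finset.Icc 1 (d - 1)) :
      (C (MvPolynomial.X j) * X ^ (d - j) : (MvPolynomial ℕ ℤ)[X]).coeff (d - o) =
        if j = o then MvPolynomial.X j else 0 := by
    rw [Finset.mem_Icc] at hj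
    simp only [coeff_C_mul, coeff_X_pow, show d - o = d - j ↔ j = o by omega, mul_ite, mul_one,
      mul_zero]
  rw [genF, coeff_add, coeff_X_pow, finsetSum_coeff, Finset.sum_congr rfl hterm,
    Finset.sum_ite_eq']
  simp only [Finset.mem_Icc]
  rcases Nat.eq_zero_or_pos o with rfl | ho0
  · simp [aDegree, hd]
  · rw [if_neg (by omega), zero_add, aDegree, if_neg ho0.ne']
    rcases ho.lt_or_eq with hlt | rfl
    · rw [if_pos ⟨ho0, by omega⟩, if_pos hlt]
      rfl
    · rw [if_neg (by omega), if_neg (lt_irrefl _), map_zero]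

/-- Row `r` of the Sylvester matrix of degrees `(d, n)` has its leading coefficient in column
`rowStart n r`. -/
def rowStart (n r : ℕ) : ℕ := if r < n then r else r - n

def sylvesterCoeff (d i r j : ℕ) : ℤ :=
  if r < d - i then (if r ≤ j ∧ j < r + d then 1 else 0)
  else if r - (d - i) ≤ j ∧ j ≤ r then ((d - (j - (r - (d - i)))).choose i : ℤ) else 0

theorem sylvester_genF_hasseDeriv_apply {d i : ℕ} (hi : 0 < i) (hid : i ≤ d)
    (r j : Fin (d + (d - i))) :
    _root_.sylvester (genF d) (hasseDeriv i (genF d)) d (d - i) r j =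
      MvPolynomial.monomial (aDegree (j - rowStart (d - i) r)) (sylvesterCoeff d i r j) := by
  simp only [_root_.sylvester, Matrix.of_apply, sylvesterCoeff, rowStart]
  by_cases hr : (r : ℕ) < d - i
  · simp only [if_pos hr]
    by_cases hb : (r : ℕ) ≤ j ∧ (j : ℕ) ≤ r + d
    · rw [if_pos hb, show d + r - j = d - (j - r) by omega, coeff_genF_sub (by omega) (by omega)]
      congr 1
      exact if_congr (by omega) rfl rfl
    · rw [if_neg hb, if_neg (by omega), map_zero]
  · simp only [if_neg hr]
    by_cases hb : (r : ℕ) - (d - i) ≤ j ∧ (j : ℕ) ≤ r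
    · rw [if_pos (by omega), if_pos hb, hasseDeriv_coeff,
        show d - i + (r - (d - i)) - j + i = d - (j - (r - (d - i))) by omega,
        coeff_genF_sub (by omega) (by omega), if_pos (by omega), ← map_natCast MvPolynomial.C,
        MvPolynomial.C_mul_monomial, mul_one]
    · rw [if_neg (by omega), if_neg hb, map_zero]

def bandOffset {N : ℕ} (n : ℕ) (π : Equiv.Perm (Fin N)) (x : Fin N) : ℕ :=
  x - rowStart n (π x)

def distinguishedRow (d n x : ℕ) : ℕ :=
  if x < d - 1 then x + n else if x < d - 1 + n then x - (d - 1) else x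

section RowAssignment

variable {d n : ℕ} {π : Equiv.Perm (Fin (d + n))}

theorem card_bandOffset_eq
    (hw : ∑ x, aDegree (bandOffset n π x) = Finsupp.single (d - 1) n + Finsupp.single n 1)
    {t : ℕ} (ht : 0 < t) :
    #{x | bandOffset n π x = t} =
      (Finsupp.single (d - 1) n + Finsupp.single n 1 : ℕ →₀ ℕ) t := by
  rw [← hw, sum_aDegree_apply _ _ ht]

theorem val_add_eq_of_val_lt (hnd : n + 1 < d)
    (hend : ∀ x, n ≤ (π x : ℕ) → (x : ℕ) ≤ π x)
    (hw : ∑ x, aDegree (bandOffset n π x) = Finsupp.single (d - 1) n + Finsupp.single n 1)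
    {x : Fin (d + n)} (hx : (π x : ℕ) < n) : (x : ℕ) = π x + (d - 1) := by
  set S : Finset (Fin (d + n)) := {x | bandOffset n π x = d - 1}
  set F : Finset (Fin (d + n)) := {x | (π x : ℕ) < n}
  have hS : #S = n := by
    simpa [show n ≠ d - 1 by omega] using card_bandOffset_eq hw (t := d - 1) (by omega)
  have hF : #F = n := by
    rw [Finset.card_equiv π (t := {r : Fin (d + n) | (r : ℕ) < n}) (by simp [F]),
      Fin.card_filter_val_lt]
    omega
  have hsub : S ⊆ F := by
    intro y hy
    simp only [S, F, Finset.mem_filter_univ] at hy ⊢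
    simp only [bandOffset, rowStart] at hy
    by_contra hy'
    rw [if_neg hy'] at hy
    have := hend y (by omega)
    omega
  have hmem : x ∈ S := by
    rw [Finset.eq_of_subset_of_card_le hsub (hF.trans hS.symm).le]
    simpa [F] using hx
  simp only [S, Finset.mem_filter_univ] at hmem
  simp only [bandOffset, rowStart, if_pos hx] at hmem
  omega

theorem val_eq_self_of_le (hnd : n + 1 < d)
    (hend : ∀ x, n ≤ (π x : ℕ) → (x : ℕ) ≤ π x)
    (hw : ∑ x, aDegree (bandOffset n π x) = Finsupp.single (d - 1) n + Finsupp.single n 1)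
    {x : Fin (d + n)} (hx : d - 1 + n ≤ x) : (π x : ℕ) = x := by
  have hge : n ≤ (π x : ℕ) := by
    by_contra h
    have := val_add_eq_of_val_lt hnd hend hw (not_le.mp h)
    omega
  have := hend x hge
  omega

theorem val_eq_add_of_lt (hnd : n + 1 < d) (hstart : ∀ x, rowStart n (π x) ≤ x)
    (hend : ∀ x, n ≤ (π x : ℕ) → (x : ℕ) ≤ π x)
    (hw : ∑ x, aDegree (bandOffset n π x) = Finsupp.single (d - 1) n + Finsupp.single n 1)
    {x : Fin (d + n)} (hx : x < d - 1) : (π x : ℕ) = x + n := by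
  have hgx : n ≤ (π x : ℕ) := by
    by_contra h
    have := val_add_eq_of_val_lt hnd hend hw (not_le.mp h)
    omega
  have hle := hend x hgx
  have hstart_x := hstart x
  simp only [rowStart, if_neg (not_lt.mpr hgx)] at hstart_x
  suffices hoff : bandOffset n π x = 0 by
    simp only [bandOffset, rowStart, if_neg (not_lt.mpr hgx)] at hoff
    omega
  by_contra h0
  have hmem : x ∈ ({y | bandOffset n π y = bandOffset n π x} : Finset _) := by simp
  have hc := card_bandOffset_eq hw (Nat.pos_of_ne_zero h0)
  have hoff_le : bandOffset n π x ≤ n := by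
    simp only [bandOffset, rowStart, if_neg (not_lt.mpr hgx)]
    omega
  rcases hoff_le.lt_or_eq with hlt | heq
  · rw [Finsupp.add_apply, Finsupp.single_eq_of_ne (by omega),
      Finsupp.single_eq_of_ne hlt.ne, add_zero, Finset.card_eq_zero] at hc
    simp [hc] at hmem
  · rw [Finsupp.add_apply, Finsupp.single_eq_of_ne (by omega), heq, Finsupp.single_eq_same,
      zero_add] at hc
    rw [heq] at hmem
    set last : Fin (d + n) := ⟨d + n - 1, by omega⟩
    have hπlast : (π last : ℕ) = d + n - 1 :=
      val_eq_self_of_le hnd hend hw (by simp only [last]; omega)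
    have hlast : last ∈ ({y | bandOffset n π y = n} : Finset _) := by
      simp only [Finset.mem_filter_univ]
      simp only [bandOffset, rowStart, hπlast, last, if_neg (show ¬d + n - 1 < n by omega)]
      omega
    have := Fin.val_eq_of_eq (Finset.card_le_one.mp hc.le x hmem last hlast)
    simp only [last] at this
    omega

theorem val_eq_distinguishedRow (hnd : n + 1 < d) (hstart : ∀ x, rowStart n (π x) ≤ x)
    (hend : ∀ x, n ≤ (π x : ℕ) → (x : ℕ) ≤ π x)
    (hw : ∑ x, aDegree (bandOffset n π x) = Finsupp.single (d - 1) n + Finsupp.single n 1)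
    (x : Fin (d + n)) : (π x : ℕ) = distinguishedRow d n x := by
  unfold distinguishedRow
  split_ifs with hlow hmid
  · exact val_eq_add_of_lt hnd hstart hend hw hlow
  · set r : Fin (d + n) := ⟨x - (d - 1), by omega⟩
    have hr := val_add_eq_of_val_lt hnd hend hw (x := π.symm r) (by simp [r]; omega)
    rw [Equiv.apply_symm_apply] at hr
    have : π.symm r = x := Fin.ext (by simp [r] at hr ⊢; omega)
    rw [← this, Equiv.apply_symm_apply, hr, Nat.add_sub_cancel]
  · exact val_eq_self_of_le hnd hend hw (by omega)

end RowAssignment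

section DistinguishedTerm

variable {d n : ℕ}

theorem val_cycleRange_pow_eq_distinguishedRow (hd : 0 < d) (hn : 0 < n) (x : Fin (d + n)) :
    ((Fin.cycleRange ⟨d + n - 2, by omega⟩ ^ n) x : ℕ) = distinguishedRow d n x := by
  rw [Fin.val_cycleRange_pow_apply, distinguishedRow]
  simp only
  split_ifs with h h1 h2
  · exact Nat.mod_eq_of_lt (by omega)
  · rw [Nat.mod_eq_sub_mod (by omega), Nat.mod_eq_of_lt (by omega)]
    omega
  all_goals omega

theorem sign_cycleRange_pow_sub_two (hd : 0 < d) (hn : 0 < n) :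
    (Equiv.Perm.sign (Fin.cycleRange (⟨d + n - 2, by omega⟩ : Fin (d + n)) ^ n) : ℤ) =
      (-1) ^ ((d - 1) * n) := by
  have hexp : (d + n - 2) * n = (d - 1) * n + n * (n - 1) := by
    obtain ⟨e, rfl⟩ := Nat.exists_eq_add_of_lt hd
    obtain ⟨m, rfl⟩ := Nat.exists_eq_add_of_lt hn
    rw [show 0 + e + 1 + (0 + m + 1) - 2 = e + m by omega, Nat.add_sub_cancel,
      Nat.add_sub_cancel]
    ring
  rw [map_pow, Fin.sign_cycleRange, ← pow_mul, hexp, pow_add,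
    (Nat.even_mul_pred_self n).neg_one_pow, mul_one]
  norm_num

theorem sum_aDegree_distinguishedRow (hd : 2 ≤ d) (hn : 0 < n) :
    ∑ x : Fin (d + n), aDegree (x - rowStart n (distinguishedRow d n x)) =
      Finsupp.single (d - 1) n + Finsupp.single n 1 := by
  rw [Fin.sum_univ_eq_sum_range (fun x => aDegree (x - rowStart n (distinguishedRow d n x)))]
  have hlow (x : ℕ) (hx : x ∈ Finset.range (d - 1)) :
      aDegree (x - rowStart n (distinguishedRow d n x)) = 0 := by
    rw [Finset.mem_range] at hx
    rw [distinguishedRow, if_pos hx, rowStart, if_neg (by omega), aDegree, if_pos (by omega)]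
  have hmid (y : ℕ) (hy : y ∈ Finset.range n) :
      aDegree (d - 1 + y - rowStart n (distinguishedRow d n (d - 1 + y))) =
        Finsupp.single (d - 1) 1 := by
    rw [Finset.mem_range] at hy
    rw [distinguishedRow, if_neg (by omega), if_pos (by omega), rowStart, if_pos (by omega),
      aDegree, if_neg (by omega)]
    congr 1
    omega
  have htop : aDegree (d - 1 + n - rowStart n (distinguishedRow d n (d - 1 + n))) =
      Finsupp.single n 1 := by
    rw [distinguishedRow, if_neg (by omega), if_neg (by omega), rowStart, if_neg (by omega),
      aDegree, if_neg (by omega)]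
    congr 1
    omega
  rw [show d + n = d - 1 + n + 1 by omega, Finset.sum_range_succ, Finset.sum_range_add,
    Finset.sum_eq_zero hlow, Finset.sum_congr rfl hmid, htop, Finset.sum_const,
    Finset.card_range, Finsupp.smul_single, smul_eq_mul, mul_one, zero_add]

theorem prod_sylvesterCoeff_distinguishedRow {i : ℕ} (hi : 0 < i) (hid : i < d) :
    ∏ x : Fin (d + (d - i)), sylvesterCoeff d i (distinguishedRow d (d - i) x) x =
      (d.choose i : ℤ) ^ (d - 1) := by
  rw [Fin.prod_univ_eq_prod_range (fun x => sylvesterCoeff d i (distinguishedRow d (d - i) x) x)]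
  have hlow (x : ℕ) (hx : x ∈ Finset.range (d - 1)) :
      sylvesterCoeff d i (distinguishedRow d (d - i) x) x = d.choose i := by
    rw [Finset.mem_range] at hx
    rw [distinguishedRow, if_pos hx, sylvesterCoeff, if_neg (by omega), if_pos (by omega)]
    congr
    omega
  have hmid (y : ℕ) (hy : y ∈ Finset.range (d - i)) :
      sylvesterCoeff d i (distinguishedRow d (d - i) (d - 1 + y)) (d - 1 + y) = 1 := by
    rw [Finset.mem_range] at hy
    rw [distinguishedRow, if_neg (by omega), if_pos (by omega), sylvesterCoeff, if_pos (by omega),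
      if_pos (by omega)]
  have htop :
      sylvesterCoeff d i (distinguishedRow d (d - i) (d - 1 + (d - i))) (d - 1 + (d - i)) = 1 := by
    rw [distinguishedRow, if_neg (by omega), if_neg (by omega), sylvesterCoeff, if_neg (by omega),
      if_pos (by omega), show d - (d - 1 + (d - i) - (d - 1 + (d - i) - (d - i))) = i by omega,
      Nat.choose_self, Nat.cast_one]
  rw [show d + (d - i) = d - 1 + (d - i) + 1 by omega, Finset.prod_range_succ,
    Finset.prod_range_add, Finset.prod_congr rfl hlow, Finset.prod_eq_one hmid, htop,
    Finset.prod_const, Finset.card_range, mul_one, mul_one]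

end DistinguishedTerm

theorem rowStart_le_of_sylvesterCoeff_ne_zero {d i r j : ℕ} (h : sylvesterCoeff d i r j ≠ 0) :
    rowStart (d - i) r ≤ j := by
  unfold sylvesterCoeff at h
  unfold rowStart
  split_ifs at h ⊢ <;> omega

theorem le_of_sylvesterCoeff_ne_zero {d i r j : ℕ} (h : sylvesterCoeff d i r j ≠ 0)
    (hr : d - i ≤ r) : j ≤ r := by
  unfold sylvesterCoeff at h
  split_ifs at h <;> omega

theorem coeff_distinguished_monomial_resultant_general (d i : ℕ)
    (hi1 : 2 ≤ i) (hi2 : i ≤ d - 1) :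
    MvPolynomial.coeff (Finsupp.single (d - 1) (d - i) + Finsupp.single (d - i) 1)
        (Rres d i) =
      (-1) ^ ((d - 1) * (d - i)) * (d.choose i : ℤ) ^ (d - 1) := by
  have hn : 0 < d - i := by omega
  set σ₀ : Equiv.Perm (Fin (d + (d - i))) :=
    Fin.cycleRange ⟨d + (d - i) - 2, by omega⟩ ^ (d - i)
  have hσ₀ := val_cycleRange_pow_eq_distinguishedRow (d := d) (by omega) hn
  have hsum : ∑ x, aDegree (x - rowStart (d - i) (σ₀ x)) =
      Finsupp.single (d - 1) (d - i) + Finsupp.single (d - i) 1 := by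
    simp_rw [σ₀, hσ₀]
    exact sum_aDegree_distinguishedRow (by omega) hn
  have hprod : ∏ x, sylvesterCoeff d i (σ₀ x) x = (d.choose i : ℤ) ^ (d - 1) := by
    simp_rw [σ₀, hσ₀]
    exact prod_sylvesterCoeff_distinguishedRow (by omega) (by omega)
  unfold Rres res
  rw [MvPolynomial.coeff_det_eq_of_unique (sylvester_genF_hasseDeriv_apply (by omega) (by omega))
    σ₀ hsum, Int.cast_id, sign_cycleRange_pow_sub_two (by omega) hn, hprod]
  intro π hw hc
  ext x
  rw [hσ₀ x]
  exact val_eq_distinguishedRow (by omega) (fun x => rowStart_le_of_sylvesterCoeff_ne_zero (hc x))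
    (fun x hx => le_of_sylvesterCoeff_ne_zero (hc x) hx) hw x

/-- The coefficient of `a_{d-1}^{d-i} a_{d-i}` in `R_i` is `(-1)^{(d-1)(d-i)} C(d,i)^{d-1}`. -/
theorem coeff_distinguished_monomial_resultant (d i : ℕ) (hd : 2 ≤ d)
    (hi1 : 2 ≤ i) (hi2 : i ≤ d - 1) :
    MvPolynomial.coeff (Finsupp.single (d - 1) (d - i) + Finsupp.single (d - i) 1)
        (Rres d i) =
      (-1) ^ ((d - 1) * (d - i)) * (d.choose i : ℤ) ^ (d - 1) :=
  coeff_distinguished_monomial_resultant_general d i hi1 hi2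
end
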